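/- arXiv:1806.07625 — 2 statements merged into one kernel-verified Lean document; each statement's English description precedes it below -/
import Mathlib

section
/- A rooted phylogenetic network N is tree-child if and only if every node of N is visible. -/
open Relation

variable {V : Type*}

/-- Indegree of a node in a digraph given by an edge relation. -/
noncomputable def indeg (E : V → V → Prop) (v : V) : ℕ := Set.ncard {u | E u v}

/-- Outdegree of a node in a digraph given by an edge relation. -/
noncomputable def outdeg (E : V → V → Prop) (v : V) : ℕ := Set.ncard {w | E v w}

/-- A directed path from `x` to `y` in the digraph `E`, recorded as the list of its nodes. -/
def IsDirPathE (E : V → V → Prop) (x y : V) (p : List V) : Prop :=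
  p.head? = some x ∧ p.getLast? = some y ∧ p.Chain' E

/-- `Dom E root x y`: `x` is a dominator of `y`, i.e. `x` is an ancestor of `y` and every
directed path from `root` to `y` contains `x`. -/
def Dom (E : V → V → Prop) (root x y : V) : Prop :=
  Relation.TransGen E x y ∧ ∀ p, IsDirPathE E root y p → x ∈ p

/-- A rooted phylogenetic network: a rooted acyclic digraph with a unique root of indegree 0
and outdegree ≥ 1, in which every non-root node has indegree 1 or outdegree 1, and every node
is reachable from the root. -/
structure RPN (V : Type*) [Fintype V] where
  E : V → V → Prop
  root : V
  acyclic : ∀ v, ¬ Relation.TransGen E v v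
  root_indeg : indeg E root = 0
  root_outdeg : 1 ≤ outdeg E root
  degree_cond : ∀ v, v ≠ root → indeg E v = 1 ∨ outdeg E v = 1
  reachable : ∀ v, Relation.ReflTransGen E root v

namespace RPN

variable [Fintype V] (N : RPN V)

/-- A leaf: indegree 1 and outdegree 0. -/
def isLeaf (v : V) : Prop := indeg N.E v = 1 ∧ outdeg N.E v = 0

/-- A reticulate node: indegree at least 2. -/
def isRetic (v : V) : Prop := 2 ≤ indeg N.E v

/-- A tree node: the root, or a node of indegree 1 and outdegree at least 2. -/
def isTreeN (v : V) : Prop := v = N.root ∨ (indeg N.E v = 1 ∧ 2 ≤ outdeg N.E v)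

/-- A redundant node: indegree 1 and outdegree 1. -/
def isRedund (v : V) : Prop := indeg N.E v = 1 ∧ outdeg N.E v = 1

/-- A directed path from `x` to `y` in `N`. -/
def IsDirPath (x y : V) (p : List V) : Prop := IsDirPathE N.E x y p

/-- `x` lies on every directed path from the root to `y`. -/
def Dominates (x y : V) : Prop := ∀ p, N.IsDirPath N.root y p → x ∈ p

/-- A node is visible if it lies on every root-to-`ℓ` path for some leaf `ℓ`. -/
def Visible (x : V) : Prop := ∃ ℓ, N.isLeaf ℓ ∧ N.Dominates x ℓ

/-- Tree-child: every non-leaf node has a child that is a leaf, a tree node, or a redundant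
node. -/
def TreeChild : Prop :=
  ∀ u, ¬ N.isLeaf u → ∃ c, N.E u c ∧ (N.isLeaf c ∨ N.isTreeN c ∨ N.isRedund c)

/-- Edge of the subgraph induced by the tree nodes. -/
def treeE (u v : V) : Prop := N.E u v ∧ N.isTreeN u ∧ N.isTreeN v

/-- Undirected adjacency in the subgraph induced by the tree nodes. -/
def treeAdj (u v : V) : Prop := N.isTreeN u ∧ N.isTreeN v ∧ (N.E u v ∨ N.E v u)

/-- The tree-node component of a tree node `u`. -/
def treeComp (u : V) : Set V := {v | Relation.ReflTransGen N.treeAdj u v}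

/-- Edge of the subgraph induced by the reticulate nodes. -/
def reticE (u v : V) : Prop := N.E u v ∧ N.isRetic u ∧ N.isRetic v

/-- Undirected adjacency in the subgraph induced by the reticulate nodes. -/
def reticAdj (u v : V) : Prop := N.isRetic u ∧ N.isRetic v ∧ (N.E u v ∨ N.E v u)

/-- The reticulation component of a reticulate node `u`. -/
def reticComp (u : V) : Set V := {v | Relation.ReflTransGen N.reticAdj u v}

open Classical in
/-- The compression quotient map: each tree node is sent to its tree-node component, each
reticulate node to its reticulation component, and every other node to itself (as a
singleton set). -/
noncomputable def comp (u : V) : Set V :=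
  if N.isTreeN u then N.treeComp u else if N.isRetic u then N.reticComp u else {u}

/-- Edge relation of the compression `N̄`: an edge between the (distinct) images of the
endpoints of each edge of `N`. -/
def compE (A B : Set V) : Prop :=
  A ≠ B ∧ ∃ u v, N.E u v ∧ N.comp u = A ∧ N.comp v = B

/-- `N` is binary: reticulate nodes have indegree exactly 2, tree nodes outdegree exactly 2. -/
def Binary : Prop :=
  (∀ v, N.isRetic v → indeg N.E v = 2) ∧ (∀ v, N.isTreeN v → outdeg N.E v = 2)

/-- `N` is galled: every reticulate node `r` has a tree-node ancestor `w` with two internally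
disjoint directed paths from `w` to `r` in which all nodes except `r` are tree nodes. -/
def Galled : Prop :=
  ∀ r, N.isRetic r → ∃ w p q, N.isTreeN w ∧
    N.IsDirPath w r p ∧ N.IsDirPath w r q ∧ p ≠ q ∧
    (∀ x ∈ p.tail.dropLast, x ∉ q.tail.dropLast) ∧
    (∀ x ∈ p, x ≠ r → N.isTreeN x) ∧ (∀ x ∈ q, x ≠ r → N.isTreeN x)

/-- The spanning subgraph determined by a switching `s` choosing one parent of each
reticulate node. -/
def SpanE (s : V → V) (u v : V) : Prop := N.E u v ∧ (N.isRetic v → u = s v)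

/-- `S` is displayed (as a softwired cluster) at `u`: for some switching, the set of leaves
below `u` in the resulting spanning tree is exactly `S`. -/
def DisplayedAt (S : Set V) (u : V) : Prop :=
  ∃ s : V → V, (∀ v, N.isRetic v → N.E (s v) v) ∧
    {ℓ | N.isLeaf ℓ ∧ Relation.ReflTransGen (N.SpanE s) u ℓ} = S

/-- An isolated reticulate node: neither its parents nor its child are reticulate. -/
def IsolatedRetic (w : V) : Prop :=
  N.isRetic w ∧ (∀ x, N.E x w → ¬ N.isRetic x) ∧ (∀ y, N.E w y → ¬ N.isRetic y)

end RPN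

/-
A tree-child network is visible bottom-up: a leaf dominates itself, and a node whose child `c`
has indegree one lies on every root path through `c`, hence dominates every leaf that `c`
dominates. Conversely, if `u` dominates a leaf `ℓ ≠ u`, take a node `v ≠ u` dominated by `u`
that is minimal with respect to the edge relation. Every parent of `v` is then `u`: a parent
not dominated by `u` would give a root path to `v` avoiding `u`. So `v` is a child of `u` of
indegree one, i.e. a leaf, a tree node or a redundant node.
-/

lemma List.IsChain.exists_rel_of_mem {α : Type*} {R : α → α → Prop} {a c : α} {l : List α}
    (hl : (a :: l).IsChain R) (hc : c ∈ a :: l) (hca : c ≠ a) : ∃ x ∈ a :: l, R x c := by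
  induction l generalizing a with
  | nil => simp_all
  | cons b l ih =>
    obtain ⟨hab, hbl⟩ := List.isChain_cons_cons.1 hl
    have hcb : c ∈ b :: l := (List.mem_cons.1 hc).resolve_left hca
    by_cases hcb' : c = b
    · exact ⟨a, List.mem_cons_self, hcb' ▸ hab⟩
    · obtain ⟨x, hx, hxc⟩ := ih hbl hcb hcb'
      exact ⟨x, List.mem_cons_of_mem a hx, hxc⟩

section Digraph

variable {E : V → V → Prop}

lemma IsDirPathE.exists_rel_of_mem {x y c : V} {p : List V} (hp : IsDirPathE E x y p)
    (hc : c ∈ p) (hcx : c ≠ x) : ∃ z ∈ p, E z c := by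
  obtain ⟨hhead, -, hchain⟩ := hp
  obtain ⟨a, l, rfl⟩ := List.exists_cons_of_ne_nil (List.ne_nil_of_mem hc)
  obtain rfl : a = x := by simpa using hhead
  exact hchain.exists_rel_of_mem hc hcx

lemma IsDirPathE.concat {x y z : V} {p : List V} (hp : IsDirPathE E x y p) (hyz : E y z) :
    IsDirPathE E x z (p ++ [z]) := by
  obtain ⟨hhead, hlast, hchain⟩ := hp
  refine ⟨?_, by simp, hchain.append (List.isChain_singleton z) ?_⟩
  · obtain ⟨a, l, rfl⟩ := List.exists_cons_of_ne_nil (fun h : p = [] => by simp [h] at hhead)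
    simpa using hhead
  · simp only [hlast, Option.mem_def, Option.some.injEq, List.head?_cons]
    rintro _ rfl _ rfl
    exact hyz

lemma indeg_ne_zero_of_rel [Finite V] {u v : V} (h : E u v) : indeg E v ≠ 0 :=
  ((Set.ncard_pos (Set.toFinite _)).2 ⟨u, h⟩).ne'

lemma indeg_eq_one_of_forall_rel_eq {u v : V} (huv : E u v) (hu : ∀ x, E x v → x = u) :
    indeg E v = 1 :=
  Set.ncard_eq_one.2 ⟨u, Set.ext fun x => ⟨hu x, fun hx => hx ▸ huv⟩⟩

lemma eq_of_rel_of_indeg_eq_one {u v w : V} (huw : E u w) (hvw : E v w) (hw : indeg E w = 1) :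
    u = v := by
  obtain ⟨a, ha⟩ := Set.ncard_eq_one.1 hw
  have hu : u ∈ ({a} : Set V) := ha ▸ huw
  have hv : v ∈ ({a} : Set V) := ha ▸ hvw
  exact hu.trans hv.symm

end Digraph

namespace RPN

variable [Fintype V] (N : RPN V)

lemma wellFounded_transGen : WellFounded (TransGen N.E) :=
  haveI : IsTrans V (TransGen N.E) := ⟨fun _ _ _ => TransGen.trans⟩
  haveI : Std.Irrefl (TransGen N.E) := ⟨N.acyclic⟩
  Finite.wellFounded_of_trans_of_irrefl _

lemma wellFounded_flip_transGen : WellFounded (flip (TransGen N.E)) :=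
  haveI : IsTrans V (flip (TransGen N.E)) := ⟨fun _ _ _ h₁ h₂ => TransGen.trans h₂ h₁⟩
  haveI : Std.Irrefl (flip (TransGen N.E)) := ⟨N.acyclic⟩
  Finite.wellFounded_of_trans_of_irrefl _

lemma wellFounded : WellFounded N.E :=
  Subrelation.wf TransGen.single N.wellFounded_transGen

lemma wellFounded_flip : WellFounded (flip N.E) :=
  Subrelation.wf (r := flip (TransGen N.E)) (fun {_ _} h => TransGen.single h)
    N.wellFounded_flip_transGen

variable {N}

lemma ne_root_of_rel {u v : V} (h : N.E u v) : v ≠ N.root := by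
  rintro rfl
  exact indeg_ne_zero_of_rel h N.root_indeg

lemma exists_rel_of_ne_root {v : V} (hv : v ≠ N.root) : ∃ u, N.E u v := by
  rcases (N.reachable v).cases_tail with h | ⟨u, -, hu⟩
  · exact absurd h hv
  · exact ⟨u, hu⟩

lemma indeg_eq_one_of_rel {u c : V} (huc : N.E u c)
    (hc : N.isLeaf c ∨ N.isTreeN c ∨ N.isRedund c) : indeg N.E c = 1 := by
  rcases hc with hc | (hc | hc) | hc
  · exact hc.1
  · exact absurd hc (ne_root_of_rel huc)
  · exact hc.1
  · exact hc.1

lemma isLeaf_or_isTreeN_or_isRedund_of_indeg_eq_one {c : V} (hc : indeg N.E c = 1) :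
    N.isLeaf c ∨ N.isTreeN c ∨ N.isRedund c := by
  rcases h : outdeg N.E c with _ | _ | n
  · exact Or.inl ⟨hc, h⟩
  · exact Or.inr (Or.inr ⟨hc, h⟩)
  · exact Or.inr (Or.inl (Or.inr ⟨hc, by omega⟩))

lemma dominates_self (v : V) : N.Dominates v v :=
  fun _ hp => List.mem_of_getLast? hp.2.1

lemma eq_root_of_dominates_root {u : V} (h : N.Dominates u N.root) : u = N.root := by
  simpa using h [N.root] ⟨rfl, rfl, List.isChain_singleton _⟩

lemma Dominates.of_rel_of_indeg_eq_one {v c ℓ : V} (hcℓ : N.Dominates c ℓ) (hvc : N.E v c)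
    (hc : indeg N.E c = 1) : N.Dominates v ℓ := by
  intro p hp
  obtain ⟨x, hx, hxc⟩ := IsDirPathE.exists_rel_of_mem hp (hcℓ p hp) (ne_root_of_rel hvc)
  exact eq_of_rel_of_indeg_eq_one hxc hvc hc ▸ hx

lemma Visible.of_rel_of_indeg_eq_one {v c : V} (hc : N.Visible c) (hvc : N.E v c)
    (hc1 : indeg N.E c = 1) : N.Visible v :=
  let ⟨ℓ, hℓ, hcℓ⟩ := hc
  ⟨ℓ, hℓ, hcℓ.of_rel_of_indeg_eq_one hvc hc1⟩

lemma eq_of_rel_of_minimal_dominates {u v w : V} (hvu : v ≠ u) (huv : N.Dominates u v)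
    (hmin : ∀ x, x ≠ u → N.Dominates u x → ¬ N.E x v) (hwv : N.E w v) : w = u := by
  by_contra hwu
  refine hmin w hwu (fun q hq => ?_) hwv
  by_contra huq
  rcases List.mem_append.1 (huv _ (hq.concat hwv)) with h | h
  · exact huq h
  · exact hvu (List.mem_singleton.1 h).symm

lemma exists_rel_indeg_eq_one_of_dominates {u ℓ : V} (hℓu : ℓ ≠ u) (huℓ : N.Dominates u ℓ) :
    ∃ c, N.E u c ∧ indeg N.E c = 1 := by
  obtain ⟨v, ⟨hvu, huv⟩, hmin⟩ :=
    N.wellFounded.has_min {v | v ≠ u ∧ N.Dominates u v} ⟨ℓ, hℓu, huℓ⟩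
  have hparent : ∀ w, N.E w v → w = u := fun w =>
    eq_of_rel_of_minimal_dominates hvu huv fun x hxu hux => hmin x ⟨hxu, hux⟩
  have hv_root : v ≠ N.root := fun h =>
    hvu (h.trans (eq_root_of_dominates_root (h ▸ huv)).symm)
  obtain ⟨w, hwv⟩ := exists_rel_of_ne_root hv_root
  obtain rfl := hparent w hwv
  exact ⟨v, hwv, indeg_eq_one_of_forall_rel_eq hwv hparent⟩

end RPN

/-- `N` is tree-child iff every node of `N` is visible. -/
theorem stmt5 [Fintype V] (N : RPN V) :
    N.TreeChild ↔ ∀ v : V, N.Visible v := by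
  constructor
  · intro htc v
    induction v using N.wellFounded_flip.induction with
    | _ v ih =>
      by_cases hv : N.isLeaf v
      · exact ⟨v, hv, N.dominates_self v⟩
      · obtain ⟨c, hvc, hc⟩ := htc v hv
        exact (ih c hvc).of_rel_of_indeg_eq_one hvc (RPN.indeg_eq_one_of_rel hvc hc)
  · intro hvis u hu
    obtain ⟨ℓ, hℓ, huℓ⟩ := hvis u
    have hℓu : ℓ ≠ u := fun h => hu (h ▸ hℓ)
    obtain ⟨c, huc, hc⟩ := RPN.exists_rel_indeg_eq_one_of_dominates hℓu huℓ
    exact ⟨c, huc, RPN.isLeaf_or_isTreeN_or_isRedund_of_indeg_eq_one hc⟩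
end

section
/- In a reticulation-visible rooted phylogenetic network, every reticulation component consists of a single reticulate node; equivalently, no reticulate node has a reticulate parent or a reticulate child. -/
open Relation

variable {V : Type*}

/-!
If a visible node `a` has a single child `b`, then every root-to-leaf path through `a` continues
through `b`, so `b` is an ancestor of a leaf `ℓ` dominated by `a`. Were `b` reticulate, it would
have a second parent `u`, and the path root ⇝ `u` → `b` ⇝ `ℓ` must still meet `a`: either up to
`u`, giving the cycle `a → b ⇝ u → b`, or after `b`, giving the cycle `a → b ⇝ a`. A reticulate
node has outdegree one, so under reticulation-visibility no edge joins two reticulate nodes.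
-/

section DirPath

variable {E : V → V → Prop} {x y z t v : V} {p q : List V}

theorem exists_isDirPathE_of_reflTransGen (h : ReflTransGen E x y) : ∃ p, IsDirPathE E x y p := by
  obtain ⟨l, hc, hl⟩ := List.exists_isChain_cons_of_relationReflTransGen h
  refine ⟨x :: l, rfl, ?_, hc⟩
  rw [List.getLast?_eq_some_getLast (List.cons_ne_nil _ _), hl]

theorem IsDirPathE.reflTransGen (h : IsDirPathE E x y p) : ReflTransGen E x y := by
  obtain ⟨hx, hy, hc⟩ := h
  cases p with
  | nil => simp at hx
  | cons a l =>
    obtain rfl : a = x := Option.some_injective _ hx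
    rw [List.getLast?_eq_some_getLast (List.cons_ne_nil _ _)] at hy
    exact List.relationReflTransGen_of_exists_isChain_cons l hc (Option.some_injective _ hy)

theorem IsDirPathE.reflTransGen_of_mem (h : IsDirPathE E x y p) (hv : v ∈ p) :
    ReflTransGen E x v ∧ ReflTransGen E v y := by
  obtain ⟨s, t, rfl⟩ := List.append_of_mem hv
  obtain ⟨hx, hy, hc⟩ := h
  constructor
  · refine IsDirPathE.reflTransGen (p := s ++ [v])
      ⟨?_, List.getLast?_concat (l := s), hc.prefix ⟨t, by simp⟩⟩
    cases s <;> simpa using hx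
  · refine IsDirPathE.reflTransGen (p := v :: t) ⟨rfl, ?_, hc.suffix ⟨s, rfl⟩⟩
    rw [List.getLast?_append] at hy
    rwa [List.getLast?_eq_some_getLast (List.cons_ne_nil _ _)] at hy ⊢

theorem IsDirPathE.append (hp : IsDirPathE E x y p) (hq : IsDirPathE E z t q) (h : E y z) :
    IsDirPathE E x t (p ++ q) := by
  obtain ⟨hpx, hpy, hpc⟩ := hp
  obtain ⟨hqz, hqt, hqc⟩ := hq
  refine ⟨by rw [List.head?_append, hpx]; rfl, by rw [List.getLast?_append, hqt]; rfl,
    List.isChain_append.mpr ⟨hpc, hqc, ?_⟩⟩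
  rintro a ha b hb
  rw [hpy, Option.mem_some_iff] at ha
  rw [hqz, Option.mem_some_iff] at hb
  exact ha ▸ hb ▸ h

theorem eq_of_outdeg_eq_one (h : outdeg E x = 1) (hy : E x y) (hz : E x z) : z = y := by
  obtain ⟨c, hc⟩ := Set.ncard_eq_one.mp h
  have hy' : y ∈ ({c} : Set V) := hc ▸ hy
  have hz' : z ∈ ({c} : Set V) := hc ▸ hz
  exact hz'.trans hy'.symm

end DirPath

namespace RPN

variable [Fintype V] (N : RPN V) {a b u ℓ : V}

theorem not_edge_of_isLeaf (hℓ : N.isLeaf ℓ) (x : V) : ¬ N.E ℓ x := by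
  have hempty : {w | N.E ℓ w} = ∅ := (Set.ncard_eq_zero (Set.toFinite _)).mp hℓ.2
  exact fun hx => (hempty ▸ hx : x ∈ (∅ : Set V))

variable {N}

theorem isRetic.outdeg_eq_one (ha : N.isRetic a) : outdeg N.E a = 1 := by
  have hroot : a ≠ N.root := by
    rintro rfl
    have := N.root_indeg
    unfold isRetic at ha
    omega
  rcases N.degree_cond a hroot with h | h
  · unfold isRetic at ha
    omega
  · exact h

theorem Dominates.reflTransGen (h : N.Dominates a ℓ) : ReflTransGen N.E a ℓ := by
  obtain ⟨p, hp⟩ := exists_isDirPathE_of_reflTransGen (N.reachable ℓ)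
  exact (hp.reflTransGen_of_mem (h p hp)).2

theorem Dominates.reflTransGen_or_of_edge (h : N.Dominates a ℓ) (hub : N.E u b)
    (hbℓ : ReflTransGen N.E b ℓ) : ReflTransGen N.E a u ∨ ReflTransGen N.E b a := by
  obtain ⟨p, hp⟩ := exists_isDirPathE_of_reflTransGen (N.reachable u)
  obtain ⟨q, hq⟩ := exists_isDirPathE_of_reflTransGen hbℓ
  rcases List.mem_append.mp (h _ (hp.append hq hub)) with ha | ha
  · exact .inl (hp.reflTransGen_of_mem ha).2
  · exact .inr (hq.reflTransGen_of_mem ha).1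

theorem not_isRetic_of_visible_of_outdeg_eq_one (hvis : N.Visible a) (hout : outdeg N.E a = 1)
    (hab : N.E a b) : ¬ N.isRetic b := by
  obtain ⟨ℓ, hℓ, hdom⟩ := hvis
  have hbℓ : ReflTransGen N.E b ℓ := by
    rcases hdom.reflTransGen.cases_head with rfl | ⟨d, had, hdℓ⟩
    · exact absurd hab (N.not_edge_of_isLeaf hℓ b)
    · rwa [← eq_of_outdeg_eq_one hout hab had]
  intro hb
  obtain ⟨u, hub, hua⟩ := Set.exists_ne_of_one_lt_ncard
    (show 1 < Set.ncard {x | N.E x b} from hb) a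
  rcases hdom.reflTransGen_or_of_edge hub hbℓ with hau | hba
  · rcases hau.cases_head with rfl | ⟨d, had, hdu⟩
    · exact hua rfl
    · rw [eq_of_outdeg_eq_one hout hab had] at hdu
      exact N.acyclic b (.tail' hdu hub)
  · exact N.acyclic a (.head' hab hba)

theorem reticComp_eq_singleton (hsep : ∀ a b, N.isRetic a → N.E a b → ¬ N.isRetic b) (v : V) :
    N.reticComp v = {v} := by
  ext x
  refine ⟨fun hx => ?_, fun hx => hx ▸ ReflTransGen.refl⟩
  rcases hx.cases_head with hvx | ⟨c, ⟨hv, hc, hvc | hcv⟩, -⟩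
  · exact hvx.symm
  · exact absurd hc (hsep v c hv hvc)
  · exact absurd hv (hsep c v hc hcv)

end RPN

/-- In a reticulation-visible network, every reticulation component is a
single reticulate node; equivalently, no reticulate node has a reticulate parent or a
reticulate child. -/
theorem stmt13 [Fintype V] (N : RPN V)
    (hrv : ∀ v, (N.isRetic v ∨ N.isRedund v) → N.Visible v) :
    ∀ v, N.isRetic v →
      N.reticComp v = {v} ∧
      (∀ u, N.E u v → ¬ N.isRetic u) ∧ (∀ w, N.E v w → ¬ N.isRetic w) := by
  have hsep : ∀ a b, N.isRetic a → N.E a b → ¬ N.isRetic b := fun a _ ha hab =>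
    RPN.not_isRetic_of_visible_of_outdeg_eq_one (hrv a (.inl ha)) ha.outdeg_eq_one hab
  intro v hv
  exact ⟨RPN.reticComp_eq_singleton hsep v, fun u huv hu => hsep u v hu huv hv,
    fun w hvw => hsep v w hv hvw⟩
end
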